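/- The vertices of the polytope F = {λ ∈ 𝒜₀ : ⟨λ, α₀ + α_j⟩ ≤ 1 for all j ∈ J} are exactly the points ϖ_i^∨/n_i for i ∈ I \ J together with all isobarycenters (1/(|J'|+1)) Σ_{j∈J'} ϖ_j^∨ over subsets J' ⊆ J (including the empty subset, giving the origin). -/

import Mathlib

open scoped RealInnerProductSpace Pointwise

noncomputable section

variable (E : Type) [NormedAddCommGroup E] [InnerProductSpace ℝ E] [FiniteDimensional ℝ E]

/-- The coroot `x^∨ = 2x/⟪x,x⟫` of a vector, under the identification of `V` with `V*`
via the inner product. -/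
def coroot (x : E) : E := (2 / ⟪x, x⟫) • x

/-- Data of an irreducible reduced root system `Φ` in a Euclidean space `E`,
together with a system of simple roots `α i`, the highest root `α₀` with its coefficients
`n i`, and the fundamental coweights `ϖ i`. -/
structure KPData (r : ℕ) where
  Φ : Finset E
  Φ_nonempty : Φ.Nonempty
  root_ne_zero : ∀ x ∈ Φ, x ≠ (0 : E)
  span_eq_top : Submodule.span ℝ (Φ : Set E) = ⊤
  reduced : ∀ x ∈ Φ, ∀ t : ℝ, t • x ∈ Φ → t = 1 ∨ t = -1
  integrality : ∀ x ∈ Φ, ∀ y ∈ Φ, ∃ m : ℤ, ⟪coroot E x, y⟫ = (m : ℝ)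
  reflect_mem : ∀ x ∈ Φ, ∀ y ∈ Φ, y - ⟪coroot E x, y⟫ • x ∈ Φ
  irreducible : ∀ S ⊆ (Φ : Set E), (∀ x ∈ S, ∀ y ∈ (Φ : Set E) \ S, ⟪x, y⟫ = 0) →
    S = ∅ ∨ S = (Φ : Set E)
  α : Fin r → E
  α_mem : ∀ i, α i ∈ Φ
  α_indep : LinearIndependent ℝ α
  pos_or_neg : ∀ x ∈ Φ, (∃ c : Fin r → ℝ, (∀ i, 0 ≤ c i) ∧ x = ∑ i, c i • α i) ∨
    (∃ c : Fin r → ℝ, (∀ i, 0 ≤ c i) ∧ x = -∑ i, c i • α i)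
  ϖ : Fin r → E
  ϖ_pair : ∀ i j, ⟪ϖ i, α j⟫ = if i = j then 1 else 0
  n : Fin r → ℕ
  n_pos : ∀ i, 0 < n i
  α₀ : E
  α₀_mem : α₀ ∈ Φ
  α₀_eq : α₀ = ∑ i, (n i : ℝ) • α i
  α₀_highest : ∀ x ∈ Φ, ∃ c : Fin r → ℝ, (∀ i, 0 ≤ c i) ∧ α₀ - x = ∑ i, c i • α i

namespace KPData

variable {E} {r : ℕ} (D : KPData E r)

/-- The set of positive roots. -/
def posRoots : Set E :=
  {x ∈ (D.Φ : Set E) | ∃ c : Fin r → ℝ, (∀ i, 0 ≤ c i) ∧ x = ∑ i, c i • D.α i}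

/-- The closed fundamental alcove `𝒜₀`. -/
def alcove : Set E := {l | (∀ i, 0 ≤ ⟪l, D.α i⟫) ∧ ⟪l, D.α₀⟫ ≤ 1}

/-- The closed fundamental Weyl chamber `𝒞₀`. -/
def chamber : Set E := {l | ∀ i, 0 ≤ ⟪l, D.α i⟫}

/-- The coroot lattice `Q^∨ = ℤΦ^∨`. -/
def corootLattice : AddSubgroup E := AddSubgroup.closure (coroot E '' (D.Φ : Set E))

/-- The root lattice `Q = ℤΦ`. -/
def rootLattice : AddSubgroup E := AddSubgroup.closure (D.Φ : Set E)

/-- The coweight lattice `P^∨`, spanned by the fundamental coweights. -/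
def coweightLattice : AddSubgroup E := AddSubgroup.closure (Set.range D.ϖ)

/-- The weight lattice `P`. -/
def weightLattice : AddSubgroup E where
  carrier := {x | ∀ y ∈ D.Φ, ∃ m : ℤ, ⟪coroot E y, x⟫ = (m : ℝ)}
  zero_mem' := fun y _ => ⟨0, by simp⟩
  add_mem' := by
    rintro a b ha hb y hy
    obtain ⟨m, hm⟩ := ha y hy
    obtain ⟨m', hm'⟩ := hb y hy
    exact ⟨m + m', by rw [inner_add_right, hm, hm']; push_cast; ring⟩
  neg_mem' := by
    rintro a ha y hy
    obtain ⟨m, hm⟩ := ha y hy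
    exact ⟨-m, by rw [inner_neg_right, hm]; push_cast; ring⟩

/-- The reflection in the hyperplane orthogonal to `x`, as an affine automorphism. -/
def refl (x : E) : E ≃ᵃ[ℝ] E :=
  ((Submodule.reflection (ℝ ∙ x)ᗮ).toLinearEquiv).toAffineEquiv

/-- Translation by a vector, as an affine automorphism. -/
def transl (v : E) : E ≃ᵃ[ℝ] E := AffineEquiv.constVAdd ℝ E v

/-- The finite Weyl group `W`, realized as a group of affine automorphisms. -/
def weylGroup : Subgroup (E ≃ᵃ[ℝ] E) :=
  Subgroup.closure {f | ∃ x ∈ D.Φ, f = refl x}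

/-- The intermediate affine Weyl group `W_Λ = Λ ⋊ W` attached to a lattice `Λ`. -/
def affWeylOf (Λ : AddSubgroup E) : Subgroup (E ≃ᵃ[ℝ] E) :=
  Subgroup.closure ({f | ∃ v ∈ Λ, f = transl v} ∪ {f | ∃ x ∈ D.Φ, f = refl x})

/-- The affine Weyl group `W_a = Q^∨ ⋊ W`. -/
def affWeyl : Subgroup (E ≃ᵃ[ℝ] E) := D.affWeylOf D.corootLattice

/-- The extended affine Weyl group `Ŵ_a = P^∨ ⋊ W`. -/
def extAffWeyl : Subgroup (E ≃ᵃ[ℝ] E) := D.affWeylOf D.coweightLattice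

/-- The stabilizer `Ω` of the fundamental alcove in the extended affine Weyl group. -/
def alcoveStab : Subgroup (E ≃ᵃ[ℝ] E) where
  carrier := {f | f ∈ D.extAffWeyl ∧ f '' D.alcove = D.alcove}
  one_mem' := ⟨one_mem _, by simp [AffineEquiv.coe_one, Set.image_id]⟩
  mul_mem' := by
    rintro a b ⟨ha, ha'⟩ ⟨hb, hb'⟩
    exact ⟨mul_mem ha hb, by rw [AffineEquiv.coe_mul, Set.image_comp, hb', ha']⟩
  inv_mem' := by
    rintro f ⟨hf, hf'⟩
    refine ⟨inv_mem hf, ?_⟩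
    conv_lhs => rw [← hf']
    rw [show ⇑(f⁻¹) = ⇑f.symm from rfl, ← Set.image_comp]
    simp [Function.comp_def]

/-- The Komrakov–Premet polytope `F`. -/
def KP : Set E :=
  {l ∈ D.alcove | ∀ i, D.n i = 1 → ⟪l, D.α₀ + D.α i⟫ ≤ 1}

/-- A closed, connected fundamental domain for a group of affine transformations. -/
def IsFundDom (G : Subgroup (E ≃ᵃ[ℝ] E)) (F : Set E) : Prop :=
  IsClosed F ∧ IsConnected F ∧ (⋃ g ∈ G, (g : E ≃ᵃ[ℝ] E) '' F) = Set.univ ∧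
    ∀ g ∈ G, g ≠ 1 → interior ((g : E ≃ᵃ[ℝ] E) '' F ∩ F) = ∅

/-- The length of a Weyl group element: the number of positive roots sent to negative roots. -/
def len (w : E ≃ᵃ[ℝ] E) : ℕ :=
  Nat.card {x : E // x ∈ D.posRoots ∧ w x ∈ Neg.neg '' D.posRoots}

end KPData

open KPData

variable {E} {r : ℕ}

/-! In the coordinates `t i = ⟪λ, α i⟫`, dual to the fundamental coweights, `F` is the polyhedron
`t ≥ 0`, `h t ≤ 1`, `h t + t j ≤ 1` (`j ∈ J`), where `h t = ⟪λ, α₀⟫ = ∑ n i * t i`, and a point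
of a polyhedron is a vertex iff no nonzero direction keeps all of its tight constraints tight.
If `h t = 1`, the minuscule coordinates vanish and two nonzero coordinates `t i`, `t k` would
leave the direction `n k • e i - n i • e k` free, so `t = e i / n i`. If `h t < 1`, let `T ⊆ J`
index the tight constraints `h t + t j = 1`; a nonzero `t i` with `i ∉ T` would leave the
direction `e i - n i / (|T| + 1) • ∑_{j ∈ T} e j` free, and the tight equations then make `t`
the isobarycenter of `T`. -/

open Filter Topology

section Polyhedron

variable {ι V : Type*} [Finite ι] [AddCommGroup V] [Module ℝ V]
  (f : ι → V →ₗ[ℝ] ℝ) (c : ι → ℝ)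

lemma eventually_add_smul_mem_polyhedron {x v : V} (hx : ∀ k, f k x ≤ c k)
    (hv : ∀ k, f k x = c k → f k v = 0) :
    ∀ᶠ ε : ℝ in 𝓝 0, ∀ k, f k (x + ε • v) ≤ c k := by
  refine eventually_all.2 fun k => ?_
  simp only [map_add, map_smul, smul_eq_mul]
  rcases (hx k).eq_or_lt with tight | slack
  · exact .of_forall fun ε => by simp [tight, hv k tight]
  · have : Tendsto (fun ε : ℝ => f k x + ε * f k v) (𝓝 0) (𝓝 (f k x)) := by
      simpa using ((tendsto_id (x := 𝓝 (0 : ℝ))).mul_const (f k v)).const_add (f k x)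
    exact (this.eventually_lt_const slack).mono fun _ => le_of_lt

theorem mem_extremePoints_polyhedron_iff {x : V} (hx : ∀ k, f k x ≤ c k) :
    x ∈ {y | ∀ k, f k y ≤ c k}.extremePoints ℝ ↔
      ∀ v, (∀ k, f k x = c k → f k v = 0) → v = 0 := by
  constructor
  · intro hext v hv
    have hv' : ∀ k, f k x = c k → f k (-v) = 0 := fun k hk => by simp [hv k hk]
    have hne : ∀ᶠ ε : ℝ in 𝓝[≠] 0, ε ≠ 0 := self_mem_nhdsWithin
    obtain ⟨ε, ⟨hplus, hminus⟩, hε⟩ :=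
      ((((eventually_add_smul_mem_polyhedron f c hx hv).and
        (eventually_add_smul_mem_polyhedron f c hx hv')).filter_mono nhdsWithin_le_nhds).and
        hne).exists
    have hseg : x ∈ openSegment ℝ (x + ε • v) (x + ε • -v) :=
      ⟨1 / 2, 1 / 2, by norm_num, by norm_num, by norm_num, by module⟩
    simpa [hε] using hext.2 hplus hminus hseg
  · refine fun hrigid => ⟨hx, fun y hy z hz ⟨a, b, ha, hb, hab, hxyz⟩ => ?_⟩
    rw [← sub_eq_zero]
    refine hrigid _ fun k hk => ?_
    have hcomb : a * f k y + b * f k z = c k := by rw [← hk, ← hxyz]; simp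
    rw [map_sub, sub_eq_zero, hk]
    have slack_sum : a * (c k - f k y) + b * (c k - f k z) = 0 := by
      linear_combination c k * hab - hcomb
    nlinarith [hy k, hz k]

end Polyhedron

section PiSingle

variable {ι : Type*} [DecidableEq ι] {t : ι → ℝ}

lemma eq_smul_single_of_forall_ne {i : ι} (h0 : ∀ l ≠ i, t l = 0) :
    t = t i • Pi.single i 1 := by
  ext l
  by_cases hl : l = i
  · simp [hl]
  · simp [hl, h0 l hl]

lemma eq_smul_sum_single {s : Finset ι} {a : ℝ} (h0 : ∀ l ∉ s, t l = 0)
    (ha : ∀ j ∈ s, t j = a) : t = a • ∑ j ∈ s, Pi.single j 1 := by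
  ext l
  by_cases hl : l ∈ s
  · simp [hl, ha l hl, Finset.sum_apply, Pi.single_apply]
  · simp [hl, h0 l hl, Finset.sum_apply, Pi.single_apply]

end PiSingle

section Coordinates

variable {ι : Type*} [Fintype ι] (n : ι → ℕ)

abbrev highestRootForm : (ι → ℝ) →ₗ[ℝ] ℝ := Fintype.linearCombination ℝ fun i => (n i : ℝ)

def kpPolytope : Set (ι → ℝ) :=
  {t | (∀ i, 0 ≤ t i) ∧ highestRootForm n t ≤ 1 ∧
    ∀ j, n j = 1 → highestRootForm n t + t j ≤ 1}

def kpConstraint : ι ⊕ Option {j // n j = 1} → (ι → ℝ) →ₗ[ℝ] ℝ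
  | .inl i => -LinearMap.proj i
  | .inr none => highestRootForm n
  | .inr (some j) => highestRootForm n + LinearMap.proj j.1

def kpBound : ι ⊕ Option {j // n j = 1} → ℝ
  | .inl _ => 0
  | .inr _ => 1

lemma kpPolytope_eq_polyhedron :
    kpPolytope n = {t | ∀ k, kpConstraint n k t ≤ kpBound n k} := by
  ext t
  simp [kpPolytope, kpConstraint, kpBound, Sum.forall, Option.forall]

variable {n} {t : ι → ℝ}

lemma mem_extremePoints_kpPolytope_iff_tight (ht : t ∈ kpPolytope n) :
    t ∈ (kpPolytope n).extremePoints ℝ ↔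
      ∀ v : ι → ℝ, (∀ i, t i = 0 → v i = 0) →
        (highestRootForm n t = 1 → highestRootForm n v = 0) →
        (∀ j, n j = 1 → highestRootForm n t + t j = 1 →
          highestRootForm n v + v j = 0) → v = 0 := by
  rw [kpPolytope_eq_polyhedron] at ht ⊢
  rw [mem_extremePoints_polyhedron_iff _ _ ht]
  simp [kpConstraint, kpBound, Sum.forall, Option.forall]

lemma highestRootForm_eq_sum_of_support {s : Finset ι} (h0 : ∀ l ∉ s, t l = 0)
    (hs : ∀ j ∈ s, n j = 1) : highestRootForm n t = ∑ j ∈ s, t j := by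
  rw [Fintype.linearCombination_apply, ← Finset.sum_subset (Finset.subset_univ s)
    fun l _ hl => by simp [h0 l hl]]
  exact Finset.sum_congr rfl fun j hj => by simp [hs j hj]

variable [DecidableEq ι]

lemma highestRootForm_sum_single {s : Finset ι} (hs : ∀ j ∈ s, n j = 1) :
    highestRootForm n (∑ j ∈ s, Pi.single j 1) = s.card := by
  simp [map_sum, Finset.sum_congr rfl fun j hj => congrArg (Nat.cast (R := ℝ)) (hs j hj)]

lemma smul_single_mem_extremePoints {i : ι} (hpos : 0 < n i) (hi : n i ≠ 1) :
    (n i : ℝ)⁻¹ • Pi.single i 1 ∈ (kpPolytope n).extremePoints ℝ := by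
  have hform : highestRootForm n ((n i : ℝ)⁻¹ • Pi.single i 1) = 1 := by simp [hpos.ne']
  have hmem : (n i : ℝ)⁻¹ • Pi.single i (1 : ℝ) ∈ kpPolytope n := by
    refine ⟨fun l => ?_, hform.le, fun j hj => ?_⟩
    · by_cases hl : l = i <;> simp [hl]
    · have hji : j ≠ i := by rintro rfl; exact hi hj
      simp [hform, hji]
  rw [mem_extremePoints_kpPolytope_iff_tight hmem]
  intro v hv0 hv1 _
  have off : ∀ l ≠ i, v l = 0 := fun l hl => hv0 l (by simp [hl])
  have hvi : v i = 0 := by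
    have := hv1 hform
    rw [eq_smul_single_of_forall_ne off] at this
    simpa [hpos.ne'] using this
  rw [eq_smul_single_of_forall_ne off, hvi, zero_smul]

lemma smul_sum_single_mem_extremePoints {s : Finset ι} (hs : ∀ j ∈ s, n j = 1) :
    ((s.card : ℝ) + 1)⁻¹ • ∑ j ∈ s, Pi.single j 1 ∈ (kpPolytope n).extremePoints ℝ := by
  set a : ℝ := ((s.card : ℝ) + 1)⁻¹
  have ha : 0 < a := by positivity
  have ha_mul : ((s.card : ℝ) + 1) * a = 1 := mul_inv_cancel₀ (by positivity)
  have hcoord : ∀ l, (a • ∑ j ∈ s, Pi.single j (1 : ℝ)) l = if l ∈ s then a else 0 := by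
    intro l; by_cases hl : l ∈ s <;> simp [hl, Finset.sum_apply, Pi.single_apply]
  have hform : highestRootForm n (a • ∑ j ∈ s, Pi.single j 1) = 1 - a := by
    rw [map_smul, highestRootForm_sum_single hs, smul_eq_mul]
    linarith
  have hmem : a • ∑ j ∈ s, Pi.single j (1 : ℝ) ∈ kpPolytope n := by
    refine ⟨fun l => ?_, by linarith, fun j _ => ?_⟩
    · rw [hcoord]; split_ifs <;> linarith
    · rw [hform, hcoord]; split_ifs <;> linarith
  rw [mem_extremePoints_kpPolytope_iff_tight hmem]
  intro v hv0 _ hv2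
  have off : ∀ l ∉ s, v l = 0 := fun l hl => hv0 l (by simp [hcoord, hl])
  have on : ∀ j ∈ s, highestRootForm n v + v j = 0 :=
    fun j hj => hv2 j (hs j hj) (by simp [hform, hcoord, hj])
  have hvform : highestRootForm n v = 0 := by
    have hsum := highestRootForm_eq_sum_of_support off hs
    rw [Finset.sum_congr rfl fun j hj => eq_neg_of_add_eq_zero_right (on j hj),
      Finset.sum_const, nsmul_eq_mul] at hsum
    nlinarith
  rw [eq_smul_sum_single (a := 0) off fun j hj => by linarith [on j hj], zero_smul]

lemma exists_eq_smul_single_of_mem_extremePoints (hn : ∀ i, 0 < n i)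
    (ht : t ∈ (kpPolytope n).extremePoints ℝ) (h1 : highestRootForm n t = 1) :
    ∃ i, n i ≠ 1 ∧ t = (n i : ℝ)⁻¹ • Pi.single i 1 := by
  obtain ⟨t_nonneg, -, t_le⟩ := ht.1
  have tight := (mem_extremePoints_kpPolytope_iff_tight ht.1).1 ht
  have minuscule_zero : ∀ j, n j = 1 → t j = 0 := fun j hj =>
    le_antisymm (by linarith [t_le j hj]) (t_nonneg j)
  have support_unique : ∀ i k, t i ≠ 0 → t k ≠ 0 → i = k := by
    intro i k hi hk
    by_contra hik
    set v : ι → ℝ := (n k : ℝ) • Pi.single i 1 - (n i : ℝ) • Pi.single k 1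
    have off : ∀ l, t l = 0 → v l = 0 := fun l hl => by
      have hli : l ≠ i := by rintro rfl; exact hi hl
      have hlk : l ≠ k := by rintro rfl; exact hk hl
      simp [v, hli, hlk]
    have hform : highestRootForm n v = 0 := by simp [v, mul_comm]
    have hv : v = 0 := tight v off (fun _ => hform)
      fun j hj _ => by rw [hform, off j (minuscule_zero j hj), add_zero]
    simpa [v, hik, (hn k).ne'] using congrFun hv i
  obtain ⟨i, hi⟩ : ∃ i, t i ≠ 0 := by
    by_contra! h0
    simp [show t = 0 from funext h0] at h1
  have off : ∀ l ≠ i, t l = 0 := fun l hl => by_contra fun h => hl (support_unique l i h hi)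
  refine ⟨i, fun hni => hi (minuscule_zero i hni), ?_⟩
  rw [eq_smul_single_of_forall_ne off] at h1 ⊢
  simp only [map_smul, Fintype.linearCombination_apply_single, smul_eq_mul, one_mul] at h1
  rw [eq_inv_of_mul_eq_one_left h1]

lemma exists_eq_smul_sum_single_of_mem_extremePoints
    (ht : t ∈ (kpPolytope n).extremePoints ℝ) (h1 : highestRootForm n t ≠ 1) :
    ∃ s : Finset ι, (∀ j ∈ s, n j = 1) ∧
      t = ((s.card : ℝ) + 1)⁻¹ • ∑ j ∈ s, Pi.single j 1 := by
  obtain ⟨t_nonneg, -, -⟩ := ht.1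
  have tight := (mem_extremePoints_kpPolytope_iff_tight ht.1).1 ht
  set T := Finset.univ.filter fun j => n j = 1 ∧ highestRootForm n t + t j = 1
  have hT : ∀ j ∈ T, n j = 1 := fun j hj => (Finset.mem_filter.1 hj).2.1
  have T_tight : ∀ j ∈ T, t j = 1 - highestRootForm n t := fun j hj => by
    linarith [(Finset.mem_filter.1 hj).2.2]
  have support : ∀ i ∉ T, t i = 0 := by
    intro i hiT
    by_contra hi
    set m : ℝ := (T.card : ℝ) + 1
    set v : ι → ℝ := Pi.single i 1 - ((n i : ℝ) / m) • ∑ j ∈ T, Pi.single j 1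
    have hcoord : ∀ l, v l = (if l = i then 1 else 0) - if l ∈ T then (n i : ℝ) / m else 0 := by
      intro l; by_cases hl : l ∈ T <;> simp [v, hl, Finset.sum_apply, Pi.single_apply]
    have hform : highestRootForm n v = n i / m := by
      simp only [v, m, map_sub, map_smul, highestRootForm_sum_single hT,
        Fintype.linearCombination_apply_single, smul_eq_mul]
      field_simp
      ring
    have hv : v = 0 := tight v
      (fun l hl => by
        have hli : l ≠ i := by rintro rfl; exact hi hl
        have hlT : l ∉ T := fun hlT => h1 (by linarith [T_tight l hlT])
        simp [hcoord, hli, hlT])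
      (fun h => absurd h h1)
      (fun j hj hjt => by
        have hjT : j ∈ T := Finset.mem_filter.2 ⟨Finset.mem_univ j, hj, hjt⟩
        have hji : j ≠ i := by rintro rfl; exact hiT hjT
        simp [hform, hcoord, hji, hjT])
    simpa [hcoord, hiT] using congrFun hv i
  have hform : highestRootForm n t = T.card * (1 - highestRootForm n t) := by
    conv_lhs => rw [eq_smul_sum_single support T_tight]
    rw [map_smul, highestRootForm_sum_single hT, smul_eq_mul, mul_comm]
  have hval : 1 - highestRootForm n t = ((T.card : ℝ) + 1)⁻¹ :=
    eq_inv_of_mul_eq_one_left (by linear_combination -hform)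
  exact ⟨T, hT, hval ▸ eq_smul_sum_single support T_tight⟩

theorem mem_extremePoints_kpPolytope_iff (hn : ∀ i, 0 < n i) :
    t ∈ (kpPolytope n).extremePoints ℝ ↔
      (∃ i, n i ≠ 1 ∧ t = (n i : ℝ)⁻¹ • Pi.single i 1) ∨
      ∃ s : Finset ι, (∀ j ∈ s, n j = 1) ∧
        t = ((s.card : ℝ) + 1)⁻¹ • ∑ j ∈ s, Pi.single j 1 := by
  constructor
  · intro ht
    by_cases h1 : highestRootForm n t = 1
    · exact .inl (exists_eq_smul_single_of_mem_extremePoints hn ht h1)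
    · exact .inr (exists_eq_smul_sum_single_of_mem_extremePoints ht h1)
  · rintro (⟨i, hi, rfl⟩ | ⟨s, hs, rfl⟩)
    · exact smul_single_mem_extremePoints (hn i) hi
    · exact smul_sum_single_mem_extremePoints hs

end Coordinates

namespace KPData

variable {V : Type} [NormedAddCommGroup V] [InnerProductSpace ℝ V] (D : KPData V r)

lemma top_le_span_α : ⊤ ≤ Submodule.span ℝ (Set.range D.α) := by
  rw [← D.span_eq_top, Submodule.span_le]
  intro x hx
  rcases D.pos_or_neg x hx with ⟨c, -, rfl⟩ | ⟨c, -, rfl⟩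
  · exact (Submodule.mem_span_range_iff_exists_fun ℝ).2 ⟨c, rfl⟩
  · exact neg_mem ((Submodule.mem_span_range_iff_exists_fun ℝ).2 ⟨c, rfl⟩)

lemma inner_linearCombination_ϖ_α (t : Fin r → ℝ) (i : Fin r) :
    ⟪Fintype.linearCombination ℝ D.ϖ t, D.α i⟫ = t i := by
  simp [Fintype.linearCombination_apply, sum_inner, real_inner_smul_left, D.ϖ_pair]

def coweightEquiv : (Fin r → ℝ) ≃ₗ[ℝ] V :=
  { Fintype.linearCombination ℝ D.ϖ with
    invFun := fun x i => ⟪x, D.α i⟫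
    left_inv := fun t => funext (D.inner_linearCombination_ϖ_α t)
    right_inv := fun x =>
      InnerProductSpace.ext_inner_right_basis (Module.Basis.mk D.α_indep D.top_le_span_α)
        fun i => by simpa using D.inner_linearCombination_ϖ_α (fun i => ⟪x, D.α i⟫) i }

lemma coweightEquiv_single (i : Fin r) : D.coweightEquiv (Pi.single i 1) = D.ϖ i := by
  simp [coweightEquiv]

lemma inner_coweightEquiv_α (t : Fin r → ℝ) (i : Fin r) :
    ⟪D.coweightEquiv t, D.α i⟫ = t i :=
  D.inner_linearCombination_ϖ_α t i

lemma inner_coweightEquiv_α₀ (t : Fin r → ℝ) :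
    ⟪D.coweightEquiv t, D.α₀⟫ = highestRootForm D.n t := by
  simp [D.α₀_eq, inner_sum, real_inner_smul_right, inner_coweightEquiv_α,
    Fintype.linearCombination_apply, mul_comm]

lemma coweightEquiv_preimage_KP : D.coweightEquiv ⁻¹' D.KP = kpPolytope D.n := by
  ext t
  simp [KP, alcove, kpPolytope, inner_add_right, inner_coweightEquiv_α,
    inner_coweightEquiv_α₀, and_assoc]

end KPData

/-- The vertices (= extreme points) of the Komrakov–Premet polytope are the
points `ϖ_i^∨/n_i` for non-minuscule `i`, together with the isobarycenters
`(1/(|J'|+1)) Σ_{j∈J'} ϖ_j^∨` over sets `J'` of minuscule indices (including `J' = ∅`,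
which gives the origin). -/
theorem KP_vertices (D : KPData E r) :
    Set.extremePoints ℝ D.KP =
      {x | ∃ i, D.n i ≠ 1 ∧ x = ((D.n i : ℝ))⁻¹ • D.ϖ i} ∪
      {x | ∃ s : Finset (Fin r), (∀ j ∈ s, D.n j = 1) ∧
        x = ((s.card : ℝ) + 1)⁻¹ • ∑ j ∈ s, D.ϖ j} := by
  have hKP : D.KP = D.coweightEquiv '' kpPolytope D.n := by
    rw [← D.coweightEquiv_preimage_KP, Set.image_preimage_eq _ D.coweightEquiv.surjective]
  ext x
  obtain ⟨t, rfl⟩ := D.coweightEquiv.surjective x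
  rw [hKP, ← image_extremePoints, D.coweightEquiv.injective.mem_set_image,
    mem_extremePoints_kpPolytope_iff D.n_pos]
  simp only [Set.mem_union, Set.mem_ofPred_eq, ← D.coweightEquiv_single, ← map_smul, ← map_sum,
    D.coweightEquiv.injective.eq_iff]
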